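/- arXiv:2212.02172 — 4 statements merged into one kernel-verified Lean document; each statement's English description precedes it below -/
import Mathlib

section
/- Let T be a compact linear operator on L²((0,1); ℂ), let (c_n) be complex numbers and (p_n) complex numbers with Re p_n > -1/2, and suppose T(xⁿ) = c_n · x^{p_n} (as elements of L²((0,1); ℂ)) for every natural number n. Then |c_n| · √((2n+1)/(2 Re p_n + 1)) → 0 as n → ∞. In particular, if p_n = a n + b with real a, b ≥ 0 (an affine-index monomial operator), then c_n → 0. -/
/-!
The normalized monomials `eₙ = √(2n+1) xⁿ` are unit vectors of `L²(0,1)` converging weakly to `0`: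
their mass concentrates at `x = 1`, so against the part of `y` supported on `(0,t)` they give
`O(√n tⁿ)`, while the rest of `y` has small norm. A compact operator sends a weakly null sequence
to a norm-null one, and `‖T eₙ‖ = |cₙ| √((2n+1)/(2 Re pₙ + 1))` since `‖x^q‖ = (2 Re q + 1)^(-1/2)`.
For `pₙ = a n + b` the ratio under the root stays above `1/(2a+2b+1)`.
-/

open MeasureTheory Set Filter Topology
open scoped InnerProductSpace NNReal

section CompactOperator

variable {𝕜 E F : Type*} [RCLike 𝕜] [NormedAddCommGroup E] [NormedSpace 𝕜 E]
  [NormedAddCommGroup F] [NormedSpace 𝕜 F]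

theorem IsCompactOperator.tendsto_zero_of_forall_dual_tendsto_zero {T : E →L[𝕜] F}
    (hT : IsCompactOperator T) {e : ℕ → E} (hb : Bornology.IsBounded (range e))
    (hw : ∀ φ : StrongDual 𝕜 E, Tendsto (fun n => φ (e n)) atTop (𝓝 0)) :
    Tendsto (fun n => T (e n)) atTop (𝓝 0) := by
  obtain ⟨K, hK, hTK⟩ := hT.image_subset_compact_of_bounded (f := (T : E →ₗ[𝕜] F)) hb
  refine tendsto_of_subseq_tendsto fun ns hns => ?_
  obtain ⟨a, -, ψ, hψ, hlim⟩ := hK.isSeqCompact fun j => hTK ⟨e (ns j), mem_range_self _, rfl⟩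
  refine ⟨ψ, ?_⟩
  suffices a = 0 by rwa [this] at hlim
  refine SeparatingDual.eq_zero_of_forall_dual_eq_zero (R := 𝕜) fun φ => ?_
  exact tendsto_nhds_unique ((φ.continuous.tendsto a).comp hlim)
    ((hw (φ.comp T)).comp (hns.comp hψ.tendsto_atTop))

end CompactOperator

section InnerProductSpace

variable {𝕜 E : Type*} [RCLike 𝕜] [NormedAddCommGroup E] [InnerProductSpace 𝕜 E]

theorem isClosed_setOf_tendsto_inner_zero {e : ℕ → E} {C : ℝ≥0} (hC : ∀ n, ‖e n‖ ≤ C) :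
    IsClosed {y | Tendsto (fun n => ⟪y, e n⟫_𝕜) atTop (𝓝 0)} := by
  have hlip : ∀ n, LipschitzWith C (fun y : E => ⟪y, e n⟫_𝕜) := fun n =>
    LipschitzWith.of_dist_le_mul fun y z => by
      rw [dist_eq_norm, dist_eq_norm, ← inner_sub_left, mul_comm]
      exact (norm_inner_le_norm _ _).trans (by gcongr; exact hC n)
  exact (LipschitzWith.uniformEquicontinuous _ C hlip).equicontinuous.isClosed_setOfPred_tendsto
    (f := fun _ => 0) continuous_const

theorem tendsto_dual_apply_of_forall_tendsto_inner [CompleteSpace E] {e : ℕ → E}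
    (h : ∀ y, Tendsto (fun n => ⟪y, e n⟫_𝕜) atTop (𝓝 0)) (φ : StrongDual 𝕜 E) :
    Tendsto (fun n => φ (e n)) atTop (𝓝 0) := by
  simpa only [InnerProductSpace.toDual_symm_apply] using h ((InnerProductSpace.toDual 𝕜 E).symm φ)

end InnerProductSpace

theorem MeasureTheory.L2.norm_sq_eq_integral_norm_sq {α 𝕜 : Type*} [RCLike 𝕜] [MeasurableSpace α]
    {μ : Measure α} (f : Lp 𝕜 2 μ) : ‖f‖ ^ 2 = ∫ a, ‖f a‖ ^ 2 ∂μ := by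
  rw [← inner_self_eq_norm_sq (𝕜 := 𝕜), L2.inner_def, ← integral_re]
  · simp only [inner_self_eq_norm_sq]
  · exact L2.integrable_inner f f

theorem integral_Ioo_zero_one_rpow {r : ℝ} (hr : -1 < r) :
    ∫ x in Ioo (0:ℝ) 1, x ^ r = (r + 1)⁻¹ := by
  rw [← integral_Ioc_eq_integral_Ioo, ← intervalIntegral.integral_of_le zero_le_one,
    integral_rpow (Or.inl hr), Real.one_rpow, Real.zero_rpow (by linarith)]
  ring

theorem tendsto_sqrt_two_mul_add_one_mul_pow {t : ℝ} (ht0 : 0 ≤ t) (ht1 : t < 1) :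
    Tendsto (fun n : ℕ => √(2 * n + 1) * t ^ n) atTop (𝓝 0) := by
  have hlim : Tendsto (fun n : ℕ => 2 * ((n : ℝ) ^ 1 * t ^ n) + t ^ n) atTop (𝓝 0) := by
    simpa using ((tendsto_pow_const_mul_const_pow_of_lt_one 1 ht0 ht1).const_mul 2).add
      (tendsto_pow_atTop_nhds_zero_of_lt_one ht0 ht1)
  refine squeeze_zero (fun n => by positivity) (fun n => ?_) hlim
  have hsqrt : √(2 * (n : ℝ) + 1) ≤ 2 * n + 1 :=
    Real.sqrt_le_iff.2 ⟨by positivity, by nlinarith⟩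
  calc √(2 * (n : ℝ) + 1) * t ^ n ≤ (2 * n + 1) * t ^ n := by gcongr
    _ = 2 * ((n : ℝ) ^ 1 * t ^ n) + t ^ n := by ring

section UnitInterval

local notation "μ₀₁" => volume.restrict (Ioo (0:ℝ) 1)

theorem norm_eq_of_ae_eq_cpow {q : ℂ} (hq : -1/2 < q.re) {f : Lp ℂ 2 μ₀₁}
    (hf : f =ᵐ[μ₀₁] fun x : ℝ => (x : ℂ) ^ q) : ‖f‖ = (√(2 * q.re + 1))⁻¹ := by
  have hsq : ‖f‖ ^ 2 = (2 * q.re + 1)⁻¹ := by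
    have hae : (fun x => ‖f x‖ ^ 2) =ᵐ[μ₀₁] fun x : ℝ => x ^ (2 * q.re) := by
      filter_upwards [hf, ae_restrict_mem measurableSet_Ioo] with x hx hmem
      rw [hx, Complex.norm_cpow_eq_rpow_re_of_pos hmem.1, ← Real.rpow_natCast,
        ← Real.rpow_mul hmem.1.le]
      ring_nf
    rw [L2.norm_sq_eq_integral_norm_sq, integral_congr_ae hae,
      integral_Ioo_zero_one_rpow (by linarith)]
  rw [← Real.sqrt_inv, ← hsq, Real.sqrt_sq (norm_nonneg f)]

theorem norm_sqrt_smul_eq_one_of_ae_eq_pow {n : ℕ} {f : Lp ℂ 2 μ₀₁}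
    (hf : f =ᵐ[μ₀₁] fun x : ℝ => (x : ℂ) ^ n) : ‖((√(2 * n + 1) : ℝ) : ℂ) • f‖ = 1 := by
  have hf' : f =ᵐ[μ₀₁] fun x : ℝ => (x : ℂ) ^ (n : ℂ) := by
    simpa only [Complex.cpow_natCast] using hf
  rw [norm_smul, norm_eq_of_ae_eq_cpow (by rw [Complex.natCast_re]; linarith [n.cast_nonneg (α := ℝ)]) hf', Complex.norm_real,
    Real.norm_of_nonneg (Real.sqrt_nonneg _), Complex.natCast_re,
    mul_inv_cancel₀ (Real.sqrt_pos.2 (by positivity)).ne']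

theorem norm_inner_le_of_ae_eq_indicator_Iio {t : ℝ} (ht : 0 ≤ t) {f : Lp ℂ 2 μ₀₁} {g : ℝ → ℂ}
    (hg : Integrable g μ₀₁) (hf : f =ᵐ[μ₀₁] (Iio t).indicator g) {n : ℕ} {h : Lp ℂ 2 μ₀₁}
    (hh : h =ᵐ[μ₀₁] fun x : ℝ => (x : ℂ) ^ n) :
    ‖⟪f, h⟫_ℂ‖ ≤ t ^ n * ∫ x, ‖g x‖ ∂μ₀₁ := by
  rw [L2.inner_def, ← integral_const_mul]
  refine norm_integral_le_of_norm_le (hg.norm.const_mul _) ?_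
  filter_upwards [hf, hh, ae_restrict_mem measurableSet_Ioo] with x hfx hhx hx
  refine (norm_inner_le_norm _ _).trans ?_
  rw [hfx, hhx, norm_pow, Complex.norm_real, Real.norm_of_nonneg hx.1.le]
  by_cases hxt : x ∈ Iio t
  · rw [indicator_of_mem hxt, mul_comm]
    exact mul_le_mul_of_nonneg_right (pow_le_pow_left₀ hx.1.le hxt.le n) (norm_nonneg _)
  · rw [indicator_of_notMem hxt, norm_zero, zero_mul]
    positivity

theorem exists_dist_lt_ae_eq_indicator_Iio (y : Lp ℂ 2 μ₀₁) {ε : ℝ} (hε : 0 < ε) :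
    ∃ t, 0 ≤ t ∧ t < 1 ∧ ∃ y' : Lp ℂ 2 μ₀₁, y' =ᵐ[μ₀₁] (Iio t).indicator y ∧ dist y y' < ε := by
  obtain ⟨δ, hδ, hsmall⟩ := (Lp.memLp y).eLpNorm_indicator_le one_le_two ENNReal.ofNat_ne_top
    (half_pos hε)
  set t := max 0 (1 - δ)
  have hy' := (Lp.memLp y).indicator (s := Iio t) measurableSet_Iio
  refine ⟨t, le_max_left _ _, max_lt one_pos (by linarith), hy'.toLp _, hy'.coeFn_toLp, ?_⟩
  have htail : μ₀₁ (Ici t) ≤ ENNReal.ofReal δ := by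
    rw [Measure.restrict_apply measurableSet_Ici]
    calc volume (Ici t ∩ Ioo 0 1) ≤ volume (Icc t 1) :=
          measure_mono fun x hx => ⟨hx.1, hx.2.2.le⟩
      _ ≤ ENNReal.ofReal δ := by
          rw [Real.volume_Icc]
          exact ENNReal.ofReal_le_ofReal (by linarith [le_max_right 0 (1 - δ)])
  have hdiff : ⇑(y - hy'.toLp _) =ᵐ[μ₀₁] (Ici t).indicator y := by
    filter_upwards [Lp.coeFn_sub y (hy'.toLp _), hy'.coeFn_toLp] with x hsub hx
    rw [hsub, Pi.sub_apply, hx, ← compl_Iio, indicator_compl, Pi.sub_apply]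
  rw [dist_eq_norm, Lp.norm_def, eLpNorm_congr_ae hdiff]
  exact (ENNReal.toReal_le_of_le_ofReal (half_pos hε).le
    (hsmall _ measurableSet_Ici htail)).trans_lt (half_lt_self hε)

theorem tendsto_inner_sqrt_smul_monomial {mono : ℕ → Lp ℂ 2 μ₀₁}
    (hmono : ∀ n, mono n =ᵐ[μ₀₁] fun x : ℝ => (x : ℂ) ^ n) (y : Lp ℂ 2 μ₀₁) :
    Tendsto (fun n : ℕ => ⟪y, ((√(2 * n + 1) : ℝ) : ℂ) • mono n⟫_ℂ) atTop (𝓝 0) := by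
  have hclosed := isClosed_setOf_tendsto_inner_zero (𝕜 := ℂ) (C := 1)
    fun n => (norm_sqrt_smul_eq_one_of_ae_eq_pow (hmono n)).le
  refine hclosed.closure_subset (Metric.mem_closure_iff.2 fun ε hε => ?_)
  obtain ⟨t, ht0, ht1, y', hy', hdist⟩ := exists_dist_lt_ae_eq_indicator_Iio y hε
  refine ⟨y', ?_, hdist⟩
  have hint : Integrable y μ₀₁ := (Lp.memLp y).integrable one_le_two
  refine squeeze_zero_norm (fun n => ?_)
    (by simpa using (tendsto_sqrt_two_mul_add_one_mul_pow ht0 ht1).mul_const (∫ x, ‖y x‖ ∂μ₀₁))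
  rw [inner_smul_right, norm_mul, Complex.norm_real, Real.norm_of_nonneg (Real.sqrt_nonneg _),
    mul_assoc]
  gcongr
  exact norm_inner_le_of_ae_eq_indicator_Iio ht0 hint hy' (hmono n)

end UnitInterval

theorem one_le_sqrt_mul_sqrt_div_affine {a b : ℝ} (ha : 0 ≤ a) (hb : 0 ≤ b) (n : ℕ) :
    1 ≤ √(2 * a + 2 * b + 1) * √((2 * n + 1) / (2 * (a * n + b) + 1)) := by
  rw [← Real.sqrt_mul (by positivity), Real.one_le_sqrt, mul_div_assoc', le_div_iff₀ (by positivity)]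
  nlinarith [n.cast_nonneg (α := ℝ), mul_nonneg ha (n.cast_nonneg (α := ℝ)),
    mul_nonneg hb (n.cast_nonneg (α := ℝ))]

/-- If `T` is a compact linear operator on `L²((0,1); ℂ)` mapping the monomial
`xⁿ` to `c_n · x^{p_n}` (with `Re p_n > -1/2`) for every `n`, then
`|c_n| √((2n+1)/(2 Re p_n + 1)) → 0`. In particular, for an affine-index monomial operator,
i.e. when `p_n = a n + b` with real `a, b ≥ 0`, we have `c_n → 0`. -/
theorem stmt4
    (T : Lp ℂ 2 (volume.restrict (Ioo (0:ℝ) 1)) →L[ℂ] Lp ℂ 2 (volume.restrict (Ioo (0:ℝ) 1)))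
    (hTc : IsCompactOperator T)
    (c : ℕ → ℂ) (p : ℕ → ℂ) (hp : ∀ n, -1/2 < (p n).re)
    (mono : ℕ → Lp ℂ 2 (volume.restrict (Ioo (0:ℝ) 1)))
    (hmono : ∀ n : ℕ, (mono n : ℝ → ℂ) =ᵐ[volume.restrict (Ioo (0:ℝ) 1)]
      fun x : ℝ => (x : ℂ) ^ (n : ℕ))
    (monop : ℕ → Lp ℂ 2 (volume.restrict (Ioo (0:ℝ) 1)))
    (hmonop : ∀ n : ℕ, (monop n : ℝ → ℂ) =ᵐ[volume.restrict (Ioo (0:ℝ) 1)]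
      fun x : ℝ => (x : ℂ) ^ (p n))
    (hT : ∀ n : ℕ, T (mono n) = c n • monop n) :
    Tendsto (fun n : ℕ =>
      ‖c n‖ * Real.sqrt ((2 * n + 1) / (2 * (p n).re + 1))) atTop (𝓝 0) ∧
    (∀ a b : ℝ, 0 ≤ a → 0 ≤ b → (∀ n : ℕ, p n = (a * n + b : ℝ)) →
      Tendsto c atTop (𝓝 0)) := by
  set e : ℕ → Lp ℂ 2 (volume.restrict (Ioo (0:ℝ) 1)) :=
    fun n => ((√(2 * n + 1) : ℝ) : ℂ) • mono n
  have he : ∀ n, ‖e n‖ = 1 := fun n => norm_sqrt_smul_eq_one_of_ae_eq_pow (hmono n)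
  have hTe : Tendsto (fun n => T (e n)) atTop (𝓝 0) :=
    hTc.tendsto_zero_of_forall_dual_tendsto_zero
      (isBounded_iff_forall_norm_le.2 ⟨1, by rintro _ ⟨n, rfl⟩; exact (he n).le⟩)
      (tendsto_dual_apply_of_forall_tendsto_inner (tendsto_inner_sqrt_smul_monomial hmono))
  have hnorm : ∀ n : ℕ, ‖T (e n)‖ = ‖c n‖ * √((2 * n + 1) / (2 * (p n).re + 1)) := by
    intro n
    rw [map_smul, hT, norm_smul, norm_smul, norm_eq_of_ae_eq_cpow (hp n) (hmonop n),
      Complex.norm_real, Real.norm_of_nonneg (Real.sqrt_nonneg _),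
      Real.sqrt_div' _ (by linarith [hp n])]
    ring
  have hweighted : Tendsto (fun n : ℕ => ‖c n‖ * √((2 * n + 1) / (2 * (p n).re + 1)))
      atTop (𝓝 0) := by
    simpa only [hnorm, norm_zero] using hTe.norm
  refine ⟨hweighted, fun a b ha hb hab => ?_⟩
  refine tendsto_zero_iff_norm_tendsto_zero.2 (squeeze_zero (fun n => norm_nonneg _) (fun n => ?_)
    (by simpa using hweighted.const_mul √(2 * a + 2 * b + 1)))
  rw [hab n, Complex.ofReal_re, mul_left_comm]
  exact le_mul_of_one_le_right (norm_nonneg _) (one_le_sqrt_mul_sqrt_div_affine ha hb n)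
end

section
/- Let S ⊆ ℕ be a set of natural numbers with ∑_{n∈S} 1/(n+1) = ∞. Then the linear span of the monomials {x ↦ xⁿ : n ∈ S} is dense in L²((0,1); ℂ). Consequently, if T and T′ are bounded linear operators on L²((0,1); ℂ) with T(xⁿ) = T′(xⁿ) for all n ∈ S, then T = T′. -/
/-!
The Gram matrix of the monomials in `L²(0,1)` is the Cauchy matrix `⟪xᵃ, xᵇ⟫ = 1 / (a + b + 1)`.
Partial fractions give a combination `r = ∑ aₖ xᵏ` (`k ∈ T ∪ {m}`) with
`⟪xᵗ, r⟫ = (t + m + 1)⁻¹ ∏_{n ∈ T} (t - n) / (t + n + 1)`, which vanishes for `t ∈ T`; hence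
`xᵐ` is within `(2m + 1)^(-1/2) ∏_{n ∈ T} |m - n| / (m + n + 1)` of `span {xⁿ : n ∈ T}`.
Each factor is at most `exp (-1 / ((m + 1) (n + 1)))`, so when `∑_{n ∈ S} 1 / (n + 1) = ∞` every
monomial lies in the closure of `span {xⁿ : n ∈ S}`. By Weierstrass the polynomials are dense in
`L²(0,1)`, and a bounded operator is determined by its values on a set with dense span.
-/

open MeasureTheory Set Finset Polynomial
open scoped InnerProductSpace

theorem exists_sum_div_eq_prod {ι : Type*} [DecidableEq ι] {ν : ι → ℝ}
    (hν : Function.Injective ν) {m : ι} {T : Finset ι} (hm : m ∉ T) :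
    ∃ a : ι → ℝ, a m = ∏ n ∈ T, (ν m + ν n + 1) / (ν m - ν n) ∧
      ∀ s : ℝ, (∀ k ∈ insert m T, s + ν k + 1 ≠ 0) →
        ∑ k ∈ insert m T, a k / (s + ν k + 1) =
          (s + ν m + 1)⁻¹ * ∏ n ∈ T, (s - ν n) / (s + ν n + 1) := by
  induction T using Finset.induction_on with
  | empty => exact ⟨fun _ => 1, by simp, fun s _ => by simp⟩
  | insert n T hnT ih =>
    have hmn : m ≠ n := fun h => hm (h ▸ mem_insert_self m T)
    obtain ⟨a, ham, hsum⟩ := ih fun h => hm (mem_insert_of_mem h)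
    have hn : n ∉ insert m T := by simp [hnT, Ne.symm hmn]
    -- Multiplying by `(s - ν n) / (s + ν n + 1) = 1 - (2 ν n + 1) / (s + ν n + 1)` only creates
    -- the new pole at `-ν n - 1`; each old term splits off a share of its residue there.
    let b : ι → ℝ := fun k => if k = n then (2 * ν n + 1) * ∑ j ∈ insert m T, a j / (ν n - ν j)
      else a k * ((ν k + ν n + 1) / (ν k - ν n))
    refine ⟨b, ?_, fun s hs => ?_⟩
    · simp only [b, if_neg hmn, prod_insert hnT, ham]
      ring
    · rw [Finset.insert_comm m n T] at hs ⊢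
      have hsn : s + ν n + 1 ≠ 0 := hs n (mem_insert_self _ _)
      have hterm : ∀ k ∈ insert m T, b k / (s + ν k + 1) =
          a k / (s + ν k + 1) * ((s - ν n) / (s + ν n + 1)) -
            (2 * ν n + 1) * (a k / (ν n - ν k)) / (s + ν n + 1) := by
        intro k hk
        have hkn : k ≠ n := fun h => hn (h ▸ hk)
        have hsk : s + ν k + 1 ≠ 0 := hs k (mem_insert_of_mem hk)
        have hkn' : ν k - ν n ≠ 0 := sub_ne_zero.mpr (hν.ne hkn)
        have hnk' : ν n - ν k ≠ 0 := sub_ne_zero.mpr (hν.ne hkn.symm)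
        simp only [b, if_neg hkn]
        field_simp
        ring
      rw [sum_insert hn, sum_congr rfl hterm, sum_sub_distrib, ← sum_mul, ← sum_div, ← mul_sum,
        hsum s fun k hk => hs k (mem_insert_of_mem hk), prod_insert hnT]
      simp only [b, if_pos rfl]
      ring

theorem sq_sub_div_add_add_one_le_exp {x y : ℝ} (hx : 0 ≤ x) (hy : 0 ≤ y) :
    ((x - y) / (x + y + 1)) ^ 2 ≤ Real.exp (-2 / ((x + 1) * (y + 1))) := by
  set u := ((x + 1) * (y + 1))⁻¹ with hu
  have hu1 : u * (x + y + 1) ≤ 1 := by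
    rw [hu, inv_mul_le_one₀ (by positivity)]
    nlinarith [mul_nonneg hx hy]
  have habs : |(x - y) / (x + y + 1)| ≤ 1 - u := by
    rw [abs_div, abs_of_pos (by positivity : 0 < x + y + 1), div_le_iff₀ (by positivity), abs_le]
    constructor <;> nlinarith
  calc ((x - y) / (x + y + 1)) ^ 2 = |(x - y) / (x + y + 1)| ^ 2 := (sq_abs _).symm
    _ ≤ (1 - u) ^ 2 := pow_le_pow_left₀ (abs_nonneg _) habs 2
    _ ≤ Real.exp (-u) ^ 2 :=
      pow_le_pow_left₀ ((abs_nonneg _).trans habs) (by linarith [Real.add_one_le_exp (-u)]) 2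
    _ = Real.exp (-2 / ((x + 1) * (y + 1))) := by
      rw [← Real.exp_nat_mul, hu]
      ring_nf

theorem exists_lt_sum_of_not_summable {ι : Type*} {f : ι → ℝ} (hf : 0 ≤ f) (h : ¬ Summable f)
    (C : ℝ) : ∃ u : Finset ι, C < ∑ i ∈ u, f i := by
  by_contra! hC
  exact h (summable_of_sum_le hf hC)

theorem exists_finset_prod_sq_lt {S : Set ℕ}
    (hS : ¬ Summable (fun n : S => (1 : ℝ) / ((n : ℕ) + 1))) (m : ℕ) {ε : ℝ} (hε : 0 < ε) :
    ∃ T : Finset ℕ, ↑T ⊆ S ∧ ∏ n ∈ T, (((m : ℝ) - n) / (m + n + 1)) ^ 2 < ε := by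
  have hc : 0 < 2 / ((m : ℝ) + 1) := by positivity
  obtain ⟨C, hC⟩ : ∃ C, Real.exp (-(2 / ((m : ℝ) + 1) * C)) < ε :=
    ((Real.tendsto_exp_neg_atTop_nhds_zero.comp (Filter.tendsto_id.const_mul_atTop hc)).eventually
      (gt_mem_nhds hε)).exists
  obtain ⟨u, hu⟩ := exists_lt_sum_of_not_summable (fun _ => by positivity) hS C
  refine ⟨u.map (Function.Embedding.subtype _), fun n hn => ?_, ?_⟩
  · obtain ⟨i, -, rfl⟩ := Finset.mem_map.mp hn
    exact i.2
  calc ∏ n ∈ u.map (Function.Embedding.subtype _), (((m : ℝ) - n) / (m + n + 1)) ^ 2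
      ≤ ∏ n ∈ u, Real.exp (-2 / (((m : ℝ) + 1) * ((n : ℕ) + 1))) := by
        rw [prod_map]
        exact prod_le_prod (fun _ _ => sq_nonneg _) fun n _ =>
          sq_sub_div_add_add_one_le_exp (Nat.cast_nonneg _) (Nat.cast_nonneg _)
    _ = Real.exp (-(2 / ((m : ℝ) + 1) * ∑ n ∈ u, (1 : ℝ) / ((n : ℕ) + 1))) := by
        rw [← Real.exp_sum, mul_sum, ← sum_neg_distrib]
        refine congrArg _ (sum_congr rfl fun n _ => ?_)
        field_simp
    _ ≤ Real.exp (-(2 / ((m : ℝ) + 1) * C)) := by gcongr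
    _ < ε := hC

theorem exists_complex_polynomial_near_of_continuousOn (a b : ℝ) {f : ℝ → ℂ}
    (hf : ContinuousOn f (Icc a b)) {ε : ℝ} (hε : 0 < ε) :
    ∃ P : ℂ[X], ∀ x ∈ Icc a b, ‖P.eval (x : ℂ) - f x‖ < ε := by
  obtain ⟨p, hp⟩ := exists_polynomial_near_of_continuousOn a b (fun x => (f x).re)
    (Complex.continuous_re.comp_continuousOn hf) (ε / 2) (half_pos hε)
  obtain ⟨q, hq⟩ := exists_polynomial_near_of_continuousOn a b (fun x => (f x).im)
    (Complex.continuous_im.comp_continuousOn hf) (ε / 2) (half_pos hε)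
  refine ⟨p.map Complex.ofRealHom + C Complex.I * q.map Complex.ofRealHom, fun x hx => ?_⟩
  set z : ℂ := ((p.eval x : ℝ) : ℂ) + Complex.I * ((q.eval x : ℝ) : ℂ)
  have heval :
      (p.map Complex.ofRealHom + C Complex.I * q.map Complex.ofRealHom).eval (x : ℂ) = z := by
    simp [z, eval_map, ← Complex.ofRealHom_eq_coe, eval₂_at_apply]
  have hre : (z - f x).re = p.eval x - (f x).re := by simp [z]
  have him : (z - f x).im = q.eval x - (f x).im := by simp [z]
  rw [heval]
  refine (Complex.norm_le_abs_re_add_abs_im _).trans_lt ?_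
  rw [hre, him]
  linarith [hp x hx, hq x hx]

local notation "μ₀₁" => volume.restrict (Ioo (0:ℝ) 1)

theorem integral_Ioo_zero_one_pow (n : ℕ) :
    ∫ x in Ioo (0:ℝ) 1, (x : ℂ) ^ n = ((n + 1 : ℝ) : ℂ)⁻¹ := by
  have hreal : ∫ x in Ioo (0:ℝ) 1, x ^ n = (n + 1 : ℝ)⁻¹ := by
    rw [← integral_Ioc_eq_integral_Ioo, ← intervalIntegral.integral_of_le zero_le_one, integral_pow]
    norm_num
  simp_rw [← Complex.ofReal_pow]
  rw [integral_complex_ofReal, hreal, Complex.ofReal_inv]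

section Monomials

variable {mono : ℕ → Lp ℂ 2 μ₀₁}

theorem inner_mono_mono
    (hmono : ∀ n : ℕ, (mono n : ℝ → ℂ) =ᵐ[μ₀₁] fun x : ℝ => (x : ℂ) ^ n) (a b : ℕ) :
    ⟪mono a, mono b⟫_ℂ = ((a + b + 1 : ℝ) : ℂ)⁻¹ := by
  have hae : (fun x => ⟪(mono a : ℝ → ℂ) x, (mono b : ℝ → ℂ) x⟫_ℂ) =ᵐ[μ₀₁]
      fun x : ℝ => (x : ℂ) ^ (a + b) := by
    filter_upwards [hmono a, hmono b] with x ha hb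
    rw [ha, hb, RCLike.inner_apply, ← Complex.ofReal_pow, ← Complex.ofReal_pow,
      Complex.conj_ofReal, pow_add]
    push_cast
    ring
  rw [L2.inner_def, integral_congr_ae hae, integral_Ioo_zero_one_pow]
  push_cast
  ring_nf

theorem exists_inner_mono_sum_smul_mono_eq
    (hmono : ∀ n : ℕ, (mono n : ℝ → ℂ) =ᵐ[μ₀₁] fun x : ℝ => (x : ℂ) ^ n)
    {T : Finset ℕ} {m : ℕ} (hm : m ∉ T) :
    ∃ a : ℕ → ℝ, a m = ∏ n ∈ T, ((m : ℝ) + n + 1) / (m - n) ∧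
      ∀ t : ℕ, ⟪mono t, ∑ k ∈ insert m T, (a k : ℂ) • mono k⟫_ℂ =
        (((t + m + 1 : ℝ))⁻¹ * ∏ n ∈ T, ((t : ℝ) - n) / (t + n + 1) : ℝ) := by
  obtain ⟨a, ham, hsum⟩ := exists_sum_div_eq_prod (ν := ((↑) : ℕ → ℝ)) Nat.cast_injective hm
  refine ⟨a, ham, fun t => ?_⟩
  rw [← hsum t fun k _ => by positivity, inner_sum]
  push_cast
  refine sum_congr rfl fun k _ => ?_
  rw [inner_smul_right, inner_mono_mono hmono, div_eq_mul_inv]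
  push_cast
  ring

theorem exists_mem_span_norm_sub_sq_eq
    (hmono : ∀ n : ℕ, (mono n : ℝ → ℂ) =ᵐ[μ₀₁] fun x : ℝ => (x : ℂ) ^ n)
    {T : Finset ℕ} {m : ℕ} (hm : m ∉ T) :
    ∃ p ∈ Submodule.span ℂ (mono '' T),
      ‖mono m - p‖ ^ 2 = (2 * m + 1 : ℝ)⁻¹ * ∏ n ∈ T, (((m : ℝ) - n) / (m + n + 1)) ^ 2 := by
  obtain ⟨a, ham, hinner⟩ := exists_inner_mono_sum_smul_mono_eq hmono hm
  set P : ℝ := ∏ n ∈ T, ((m : ℝ) - n) / (m + n + 1) with hP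
  have hP0 : P ≠ 0 := prod_ne_zero_iff.mpr fun n hn => div_ne_zero
    (sub_ne_zero.mpr fun h => hm (Nat.cast_injective h ▸ hn)) (by positivity)
  have ham' : a m = P⁻¹ := by
    rw [ham, hP, ← prod_inv_distrib]
    exact prod_congr rfl fun n _ => (inv_div _ _).symm
  set r : Lp ℂ 2 μ₀₁ := ∑ k ∈ insert m T, (a k : ℂ) • mono k with hr
  have hperp : ∀ t ∈ T, ⟪mono t, r⟫_ℂ = 0 := fun t ht => by
    rw [hinner, prod_eq_zero ht (by simp), mul_zero, Complex.ofReal_zero]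
  have hrm : ⟪mono m, r⟫_ℂ = ((2 * m + 1 : ℝ)⁻¹ * P : ℝ) := by
    rw [hinner, hP, two_mul]
  have hnorm_r : ‖r‖ ^ 2 = a m * ((2 * m + 1 : ℝ)⁻¹ * P) := by
    have hrr : ⟪r, r⟫_ℂ = (a m : ℂ) * ((2 * m + 1 : ℝ)⁻¹ * P : ℝ) := by
      nth_rw 1 [hr]
      rw [sum_inner, sum_insert hm, sum_eq_zero fun k hk => by
        rw [inner_smul_left, hperp k hk, mul_zero]]
      rw [inner_smul_left, hrm, Complex.conj_ofReal, add_zero]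
    rw [← inner_self_eq_norm_sq (𝕜 := ℂ), hrr]
    exact (Complex.re_ofReal_mul _ _).trans (congrArg _ (Complex.ofReal_re _))
  refine ⟨-(a m : ℂ)⁻¹ • ∑ k ∈ T, (a k : ℂ) • mono k, ?_, ?_⟩
  · refine Submodule.smul_mem _ _ (Submodule.sum_mem _ fun k hk => Submodule.smul_mem _ _ ?_)
    exact Submodule.subset_span ⟨k, hk, rfl⟩
  · have ham0 : (a m : ℂ) ≠ 0 := by rw [ham']; exact_mod_cast inv_ne_zero hP0
    have hdiff : mono m - -(a m : ℂ)⁻¹ • ∑ k ∈ T, (a k : ℂ) • mono k = (a m : ℂ)⁻¹ • r := by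
      rw [hr, sum_insert hm, smul_add, smul_smul, inv_mul_cancel₀ ham0, one_smul, neg_smul,
        sub_neg_eq_add]
    rw [hdiff, norm_smul, mul_pow, hnorm_r, ham', Finset.prod_pow, ← hP,
      ← Complex.ofReal_inv, Complex.norm_real, Real.norm_eq_abs, sq_abs]
    field_simp

theorem coeFn_sum_coeff_smul_mono
    (hmono : ∀ n : ℕ, (mono n : ℝ → ℂ) =ᵐ[μ₀₁] fun x : ℝ => (x : ℂ) ^ n) (P : ℂ[X]) :
    ⇑(∑ k ∈ P.support, P.coeff k • mono k) =ᵐ[μ₀₁] fun x => P.eval (x : ℂ) := by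
  filter_upwards [Lp.coeFn_fun_finsetSum P.support fun k => P.coeff k • mono k,
    ae_all_iff.mpr fun k => Lp.coeFn_smul (P.coeff k) (mono k), ae_all_iff.mpr hmono]
    with x hsum hsmul hpow
  rw [hsum, eval_eq_sum, sum_def]
  refine sum_congr rfl fun k _ => ?_
  rw [hsmul k, Pi.smul_apply, hpow k, smul_eq_mul]

theorem dense_span_range_mono
    (hmono : ∀ n : ℕ, (mono n : ℝ → ℂ) =ᵐ[μ₀₁] fun x : ℝ => (x : ℂ) ^ n) :
    Dense (Submodule.span ℂ (range mono) : Set (Lp ℂ 2 μ₀₁)) := by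
  refine dense_closure.mp
    ((Lp.boundedContinuousFunction_dense ℂ μ₀₁ (p := 2) ENNReal.ofNat_ne_top).mono ?_)
  intro g hg
  obtain ⟨G, hG⟩ := Lp.mem_boundedContinuousFunction_iff.mp hg
  have hgG : (g : ℝ → ℂ) =ᵐ[μ₀₁] G := by
    rw [← hG]
    exact ContinuousMap.coeFn_toAEEqFun μ₀₁ G.toContinuousMap
  refine Metric.mem_closure_iff.mpr fun ε hε => ?_
  obtain ⟨P, hP⟩ := exists_complex_polynomial_near_of_continuousOn 0 1 G.continuous.continuousOn
    (half_pos hε)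
  set Q : Lp ℂ 2 μ₀₁ := ∑ k ∈ P.support, P.coeff k • mono k
  refine ⟨Q, Submodule.sum_mem _ fun k _ =>
    Submodule.smul_mem _ _ (Submodule.subset_span ⟨k, rfl⟩), ?_⟩
  have hbound : ∀ᵐ x ∂μ₀₁, ‖(g - Q : Lp ℂ 2 μ₀₁) x‖ ≤ ε / 2 := by
    filter_upwards [Lp.coeFn_sub g Q, hgG, coeFn_sum_coeff_smul_mono hmono P,
      ae_restrict_mem measurableSet_Ioo] with x hsub hG hQ hx
    rw [hsub, Pi.sub_apply, hG, hQ, norm_sub_rev]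
    exact (hP x (Ioo_subset_Icc_self hx)).le
  calc dist g Q ≤ measureUnivNNReal μ₀₁ ^ (2 : ENNReal).toReal⁻¹ * (ε / 2) :=
        (dist_eq_norm g Q).trans_le (Lp.norm_le_of_ae_bound (by positivity) hbound)
    _ = ε / 2 := by simp [measureUnivNNReal, Real.volume_Ioo]
    _ < ε := half_lt_self hε

theorem mono_mem_closure_span
    (hmono : ∀ n : ℕ, (mono n : ℝ → ℂ) =ᵐ[μ₀₁] fun x : ℝ => (x : ℂ) ^ n)
    {S : Set ℕ} (hS : ¬ Summable (fun n : S => (1 : ℝ) / ((n : ℕ) + 1))) (m : ℕ) :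
    mono m ∈ closure (Submodule.span ℂ (mono '' S) : Set (Lp ℂ 2 μ₀₁)) := by
  by_cases hmS : m ∈ S
  · exact subset_closure (Submodule.subset_span ⟨m, hmS, rfl⟩)
  refine Metric.mem_closure_iff.mpr fun ε hε => ?_
  obtain ⟨T, hTS, hT⟩ := exists_finset_prod_sq_lt hS m (pow_pos hε 2)
  obtain ⟨p, hp, hnorm⟩ := exists_mem_span_norm_sub_sq_eq hmono fun h => hmS (hTS h)
  refine ⟨p, Submodule.span_mono (image_mono hTS) hp, ?_⟩
  rw [dist_eq_norm]
  refine lt_of_pow_lt_pow_left₀ 2 hε.le ?_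
  calc ‖mono m - p‖ ^ 2 ≤ ∏ n ∈ T, (((m : ℝ) - n) / (m + n + 1)) ^ 2 := by
        rw [hnorm]
        exact mul_le_of_le_one_left (prod_nonneg fun _ _ => sq_nonneg _)
          (inv_le_one_of_one_le₀ (by linarith [(Nat.cast_nonneg m : (0 : ℝ) ≤ m)]))
    _ < ε ^ 2 := hT

end Monomials

/-- Müntz–Szász in `L²(0,1)`: If `S ⊆ ℕ` satisfies `∑_{n∈S} 1/(n+1) = ∞`
(i.e. the family is not summable), then the linear span of the monomials `{xⁿ : n ∈ S}` is
dense in `L²((0,1); ℂ)`; consequently two bounded operators agreeing on these monomials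
are equal. -/
theorem stmt5 (S : Set ℕ) (hS : ¬ Summable (fun n : S => (1 : ℝ) / ((n : ℕ) + 1)))
    (mono : ℕ → Lp ℂ 2 (volume.restrict (Ioo (0:ℝ) 1)))
    (hmono : ∀ n : ℕ, (mono n : ℝ → ℂ) =ᵐ[volume.restrict (Ioo (0:ℝ) 1)]
      fun x : ℝ => (x : ℂ) ^ (n : ℕ)) :
    Dense (↑(Submodule.span ℂ (mono '' S)) : Set (Lp ℂ 2 (volume.restrict (Ioo (0:ℝ) 1)))) ∧
    ∀ T T' : Lp ℂ 2 (volume.restrict (Ioo (0:ℝ) 1)) →L[ℂ]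
        Lp ℂ 2 (volume.restrict (Ioo (0:ℝ) 1)),
      (∀ n ∈ S, T (mono n) = T' (mono n)) → T = T' := by
  have hdense : Dense (Submodule.span ℂ (mono '' S) : Set (Lp ℂ 2 μ₀₁)) := by
    rw [Submodule.dense_iff_topologicalClosure_eq_top, eq_top_iff,
      ← Submodule.dense_iff_topologicalClosure_eq_top.mp (dense_span_range_mono hmono)]
    refine Submodule.topologicalClosure_minimal _ ?_ (Submodule.isClosed_topologicalClosure _)
    exact Submodule.span_le.mpr (range_subset_iff.mpr (mono_mem_closure_span hmono hS))
  refine ⟨hdense, fun T T' h => ContinuousLinearMap.ext_on hdense ?_⟩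
  rintro _ ⟨n, hn, rfl⟩
  exact h n hn
end

section
/- There is no bounded linear operator T on L²((0,1); ℂ) such that T(xⁿ) = (n + 1/2) e^{-(n+1/2)} · xⁿ for every natural number n. In particular, a monomial operator can fail to be bounded even though its coefficient sequence c_n = (n+1/2)e^{-(n+1/2)} tends to 0. -/
/-!
Since `(n + 1/2) e^{-(n+1/2)} xⁿ = e^{-1/2} (n + 1/2) (x/e)ⁿ`, the operator acts on polynomials as
`p ↦ e^{-1/2} (x p' + p/2)(x/e)`, so it contains a copy of the unbounded operator `x d/dx`.
Test it on `(1 + i x/k)^{k²}`, a polynomial approximation of `e^{ikx}`: its modulus stays below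
`e^{x²/2} ≤ 2` on `(0, 1)`, while the modulus of its image is at least `k/12 - 1/2` on `(1/2, 1)`.
So the operator norm would have to grow linearly in `k`.
-/

open MeasureTheory Set Finset Complex

theorem sum_range_choose_mul_pow {R : Type*} [CommSemiring R] (z : R) (N : ℕ) :
    ∑ n ∈ range (N + 1), (N.choose n : R) * z ^ n = (1 + z) ^ N := by
  rw [add_comm 1 z, add_pow]
  exact sum_congr rfl fun n _ => by rw [one_pow, mul_one, mul_comm]

theorem sum_range_mul_choose_mul_pow {R : Type*} [CommSemiring R] (z : R) (N : ℕ) :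
    ∑ n ∈ range (N + 1), (n * N.choose n : R) * z ^ n = N * z * (1 + z) ^ (N - 1) := by
  cases N with
  | zero => simp
  | succ M =>
    rw [sum_range_succ', add_tsub_cancel_right, ← sum_range_choose_mul_pow, mul_sum]
    simp only [Nat.cast_zero, zero_mul, add_zero]
    refine sum_congr rfl fun i _ => ?_
    have h : ((M + 1 : ℕ) * M.choose i : R) = (M + 1).choose (i + 1) * (i + 1 : ℕ) := by
      exact_mod_cast congrArg (Nat.cast : ℕ → R) (Nat.add_one_mul_choose_eq M i)
    calc ((i + 1 : ℕ) * (M + 1).choose (i + 1) : R) * z ^ (i + 1)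
        = ((M + 1).choose (i + 1) * (i + 1 : ℕ) : R) * z ^ (i + 1) := by ring
      _ = _ := by rw [← h]; push_cast; ring

theorem sum_range_choose_mul_pow_mul_coeff (y : ℂ) (N : ℕ) :
    ∑ n ∈ range (N + 1), N.choose n * y ^ n *
        ((((n : ℝ) + 1 / 2) * Real.exp (-((n : ℝ) + 1 / 2)) : ℝ) : ℂ) =
      Real.exp (-(1 / 2)) * (N * (y * Real.exp (-1)) * (1 + y * Real.exp (-1)) ^ (N - 1) +
        (1 + y * Real.exp (-1)) ^ N / 2) := by
  have hterm : ∀ n : ℕ, N.choose n * y ^ n *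
      ((((n : ℝ) + 1 / 2) * Real.exp (-((n : ℝ) + 1 / 2)) : ℝ) : ℂ) =
        Real.exp (-(1 / 2)) * ((n * N.choose n) * (y * Real.exp (-1)) ^ n +
          (N.choose n * (y * Real.exp (-1)) ^ n) / 2) := by
    intro n
    have hexp : Real.exp (-((n : ℝ) + 1 / 2)) = Real.exp (-(1 / 2)) * Real.exp (-1) ^ n := by
      rw [← Real.exp_nat_mul, ← Real.exp_add]; ring_nf
    push_cast [hexp]
    ring
  rw [sum_congr rfl fun n _ => hterm n, ← mul_sum, sum_add_distrib, ← sum_div,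
    sum_range_mul_choose_mul_pow, sum_range_choose_mul_pow]

section OneAddMulI

variable (t : ℝ) (N : ℕ)

theorem norm_one_add_mul_I_pow_sq : ‖(1 + t * I) ^ N‖ ^ 2 = (1 + t ^ 2) ^ N := by
  rw [norm_pow, ← pow_mul, mul_comm N 2, pow_mul, Complex.sq_norm, ← ofReal_one,
    normSq_add_mul_I, one_pow]

theorem one_le_norm_one_add_mul_I_pow : 1 ≤ ‖(1 + t * I) ^ N‖ := by
  have h : 1 ≤ ‖(1 + t * I) ^ N‖ ^ 2 := by
    rw [norm_one_add_mul_I_pow_sq]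
    exact one_le_pow₀ (by nlinarith)
  nlinarith [norm_nonneg ((1 + t * I) ^ N)]

theorem norm_one_add_mul_I_pow_le : ‖(1 + t * I) ^ N‖ ≤ Real.exp (N * t ^ 2 / 2) := by
  refine (pow_le_pow_iff_left₀ (norm_nonneg _) (Real.exp_pos _).le two_ne_zero).1 ?_
  calc ‖(1 + t * I) ^ N‖ ^ 2 = (1 + t ^ 2) ^ N := norm_one_add_mul_I_pow_sq t N
    _ ≤ Real.exp (t ^ 2) ^ N := by gcongr; linarith [Real.add_one_le_exp (t ^ 2)]
    _ = Real.exp (N * t ^ 2 / 2) ^ 2 := by rw [← Real.exp_nat_mul, ← Real.exp_nat_mul]; ring_nf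

theorem sub_le_norm_mul_pow_add_pow :
    N * |t| - Real.exp (N * t ^ 2 / 2) / 2 ≤
      ‖N * (t * I) * (1 + t * I) ^ (N - 1) + (1 + t * I) ^ N / 2‖ := by
  have hlead : N * |t| ≤ ‖N * (t * I) * (1 + t * I) ^ (N - 1)‖ := by
    rw [norm_mul, norm_mul, norm_mul, Complex.norm_natCast, norm_I, mul_one, norm_real,
      Real.norm_eq_abs]
    exact le_mul_of_one_le_right (by positivity) (one_le_norm_one_add_mul_I_pow t _)
  have htail : ‖(1 + t * I) ^ N / 2‖ ≤ Real.exp (N * t ^ 2 / 2) / 2 := by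
    rw [norm_div, Complex.norm_two]
    gcongr
    exact norm_one_add_mul_I_pow_le t N
  linarith [norm_le_add_norm_add (N * (t * I) * (1 + t * I) ^ (N - 1)) ((1 + t * I) ^ N / 2)]

end OneAddMulI

theorem MeasureTheory.Lp.coeFn_sum_smul {α ι 𝕜 E : Type*} [MeasurableSpace α] {μ : Measure α}
    {p : ENNReal} [NormedField 𝕜] [NormedAddCommGroup E] [NormedSpace 𝕜 E]
    (s : Finset ι) (b : ι → 𝕜) (g : ι → Lp E p μ) (φ : ι → α → E)
    (hg : ∀ i ∈ s, g i =ᵐ[μ] φ i) :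
    ⇑(∑ i ∈ s, b i • g i) =ᵐ[μ] ∑ i ∈ s, b i • φ i := by
  classical
  induction s using Finset.induction_on with
  | empty => simpa using Lp.coeFn_zero E p μ
  | insert i s hi ih =>
    have hs := ih fun j hj => hg j (mem_insert_of_mem hj)
    filter_upwards [Lp.coeFn_add (b i • g i) (∑ j ∈ s, b j • g j), Lp.coeFn_smul (b i) (g i),
      hg i (mem_insert_self i s), hs] with x h1 h2 h3 h4
    rw [sum_insert hi, h1, sum_insert hi]
    simp only [Pi.add_apply, h2, Pi.smul_apply, h3, h4]

theorem MeasureTheory.Lp.pow_mul_measureReal_le_norm_pow {α E : Type*} [MeasurableSpace α]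
    {μ : Measure α} {p : ENNReal} [NormedAddCommGroup E] (hp₀ : p ≠ 0) (hp : p ≠ ⊤)
    (f : Lp E p μ) {S : Set α} {m : ℝ} (hm : 0 ≤ m) (hS : ∀ᵐ x ∂μ, x ∈ S → m ≤ ‖f x‖) :
    m ^ p.toReal * μ.real S ≤ ‖f‖ ^ p.toReal := by
  have hsub : μ S ≤ μ {x | ENNReal.ofReal m ≤ ‖f x‖₊} := by
    refine measure_mono_ae (hS.mono fun x hx hxS => ?_)
    show ENNReal.ofReal m ≤ ‖f x‖₊
    rw [← enorm_eq_nnnorm, ← ofReal_norm]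
    exact ENNReal.ofReal_le_ofReal (hx hxS)
  have hmarkov := (mul_le_mul_right hsub _).trans
    (Lp.mul_meas_ge_le_pow_enorm' f hp₀ hp (ENNReal.ofReal m))
  have hf : 0 ≤ ‖f‖ := by rw [Lp.norm_def]; exact ENNReal.toReal_nonneg
  rw [ENNReal.ofReal_rpow_of_nonneg hm ENNReal.toReal_nonneg,
    ENNReal.ofReal_rpow_of_nonneg hf ENNReal.toReal_nonneg] at hmarkov
  rcases eq_top_or_lt_top (μ S) with h | h
  · simp only [measureReal_def, h, ENNReal.toReal_top, mul_zero]; positivity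
  · rw [← ENNReal.ofReal_toReal h.ne, ← ENNReal.ofReal_mul (by positivity)] at hmarkov
    exact (ENNReal.ofReal_le_ofReal_iff (by positivity)).1 hmarkov

section Monomials

variable {μ : Measure ℝ}

noncomputable def binomialSum (mono : ℕ → Lp ℂ 2 μ) (N : ℕ) (z : ℂ) : Lp ℂ 2 μ :=
  ∑ n ∈ range (N + 1), (N.choose n * z ^ n : ℂ) • mono n

variable {mono : ℕ → Lp ℂ 2 μ} (hmono : ∀ n : ℕ, mono n =ᵐ[μ] fun x : ℝ => (x : ℂ) ^ n)
include hmono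

theorem coeFn_sum_smul_mono (s : Finset ℕ) (b : ℕ → ℂ) :
    ⇑(∑ n ∈ s, b n • mono n) =ᵐ[μ] fun x => ∑ n ∈ s, b n * (x : ℂ) ^ n :=
  (Lp.coeFn_sum_smul s b mono _ fun n _ => hmono n).mono fun x hx => by
    rw [hx, Finset.sum_apply]
    rfl

theorem coeFn_binomialSum (N : ℕ) (z : ℂ) :
    binomialSum mono N z =ᵐ[μ] fun x => (1 + z * x) ^ N :=
  (coeFn_sum_smul_mono hmono _ _).trans <| .of_forall fun x => by
    simp only [← sum_range_choose_mul_pow, mul_pow, mul_assoc]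

theorem coeFn_apply_binomialSum (T : Lp ℂ 2 μ →L[ℂ] Lp ℂ 2 μ)
    (hT : ∀ n : ℕ, T (mono n) =
      ((((n : ℝ) + 1 / 2) * Real.exp (-((n : ℝ) + 1 / 2)) : ℝ) : ℂ) • mono n)
    (N : ℕ) (z : ℂ) :
    T (binomialSum mono N z) =ᵐ[μ] fun x =>
      Real.exp (-(1 / 2)) * (N * (z * x * Real.exp (-1)) * (1 + z * x * Real.exp (-1)) ^ (N - 1) +
        (1 + z * x * Real.exp (-1)) ^ N / 2) := by
  have hTsum : T (binomialSum mono N z) = ∑ n ∈ range (N + 1),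
      (N.choose n * z ^ n * ((((n : ℝ) + 1 / 2) * Real.exp (-((n : ℝ) + 1 / 2)) : ℝ) : ℂ)) •
        mono n := by
    simp only [binomialSum, map_sum, map_smul, hT, smul_smul]
  rw [hTsum]
  refine (coeFn_sum_smul_mono hmono _ _).trans <| .of_forall fun x => ?_
  simp only [← sum_range_choose_mul_pow_mul_coeff]
  exact sum_congr rfl fun n _ => by ring

end Monomials

instance : IsProbabilityMeasure (volume.restrict (Ioo (0 : ℝ) 1)) := ⟨by simp⟩

theorem Real.exp_half_le_two : Real.exp (1 / 2) ≤ 2 := by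
  have := Real.exp_bound_div_one_sub_of_interval (x := 1 / 2) (by norm_num) (by norm_num)
  norm_num at this
  exact this

section UnitInterval

variable {mono : ℕ → Lp ℂ 2 (volume.restrict (Ioo (0 : ℝ) 1))}
  (hmono : ∀ n : ℕ, mono n =ᵐ[volume.restrict (Ioo (0 : ℝ) 1)] fun x : ℝ => (x : ℂ) ^ n)
include hmono

theorem norm_binomialSum_le (k : ℕ) : ‖binomialSum mono (k ^ 2) (I / k)‖ ≤ 2 := by
  have hbound : ∀ᵐ x ∂volume.restrict (Ioo (0 : ℝ) 1),
      ‖binomialSum mono (k ^ 2) (I / k) x‖ ≤ 2 := by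
    filter_upwards [coeFn_binomialSum hmono (k ^ 2) (I / k),
      ae_restrict_mem measurableSet_Ioo] with x hx hx01
    have hw : I / k * x = ((x / k : ℝ) : ℂ) * I := by push_cast; ring
    have hexponent : ((k ^ 2 : ℕ) : ℝ) * (x / k) ^ 2 / 2 ≤ 1 / 2 := by
      rcases eq_or_ne (k : ℝ) 0 with hk | hk
      · simp [hk]
      · field_simp
        push_cast
        exact mul_le_of_le_one_right (sq_nonneg _) (by nlinarith [hx01.1, hx01.2])
    rw [hx, hw]
    calc _ ≤ Real.exp (((k ^ 2 : ℕ) : ℝ) * (x / k) ^ 2 / 2) := norm_one_add_mul_I_pow_le _ _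
      _ ≤ Real.exp (1 / 2) := Real.exp_le_exp.2 hexponent
      _ ≤ 2 := Real.exp_half_le_two
  simpa [measureUnivNNReal] using Lp.norm_le_of_ae_bound zero_le_two hbound

theorem ae_le_norm_apply_binomialSum
    (T : Lp ℂ 2 (volume.restrict (Ioo (0 : ℝ) 1)) →L[ℂ] Lp ℂ 2 (volume.restrict (Ioo (0 : ℝ) 1)))
    (hT : ∀ n : ℕ, T (mono n) =
      ((((n : ℝ) + 1 / 2) * Real.exp (-((n : ℝ) + 1 / 2)) : ℝ) : ℂ) • mono n)
    {k : ℕ} (hk : 0 < k) :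
    ∀ᵐ x ∂volume.restrict (Ioo (0 : ℝ) 1), x ∈ Ioo (1 / 2 : ℝ) 1 →
      (k : ℝ) / 12 - 1 / 2 ≤ ‖T (binomialSum mono (k ^ 2) (I / k)) x‖ := by
  filter_upwards [coeFn_apply_binomialSum hmono T hT (k ^ 2) (I / k)] with x hx hx12
  set t : ℝ := x * Real.exp (-1) / k
  have hw : I / k * x * Real.exp (-1) = (t : ℂ) * I := by simp only [t]; push_cast; ring
  have hlin : ((k ^ 2 : ℕ) : ℝ) * |t| = k * x * Real.exp (-1) := by
    rw [abs_of_pos (by have := hx12.1; positivity)]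
    simp only [t]
    push_cast
    field_simp
  have hquad : ((k ^ 2 : ℕ) : ℝ) * t ^ 2 / 2 ≤ 1 / 2 := by
    have he : Real.exp (-1) ≤ 1 := Real.exp_le_one_iff.2 (by norm_num)
    simp only [t]
    push_cast
    field_simp
    rw [← mul_pow]
    exact pow_le_one₀ (by have := hx12.1; positivity)
      (mul_le_one₀ hx12.2.le (Real.exp_pos _).le he)
  have h32 : 1 / 12 ≤ x * Real.exp (-(3 / 2)) := by
    have he : Real.exp (3 / 2) ≤ 6 := by
      rw [show (3 / 2 : ℝ) = 1 + 1 / 2 by norm_num, Real.exp_add]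
      nlinarith [Real.exp_one_lt_three, Real.exp_half_le_two, Real.exp_pos 1]
    rw [Real.exp_neg, le_mul_inv_iff₀ (Real.exp_pos _)]
    nlinarith [hx12.1]
  rw [hx, hw, norm_mul, norm_real, Real.norm_of_nonneg (Real.exp_pos _).le]
  calc (k : ℝ) / 12 - 1 / 2
      ≤ Real.exp (-(1 / 2)) * (((k ^ 2 : ℕ) : ℝ) * |t| - Real.exp (1 / 2) / 2) := by
        have hprod : Real.exp (-(1 / 2)) * Real.exp (1 / 2) = 1 := by
          rw [← Real.exp_add]; norm_num
        have hprod' : Real.exp (-(1 / 2)) * Real.exp (-1) = Real.exp (-(3 / 2)) := by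
          rw [← Real.exp_add]; norm_num
        rw [hlin]
        have hk12 := mul_le_mul_of_nonneg_left h32 (by positivity : (0 : ℝ) ≤ k)
        linear_combination hk12 - (k * x) * hprod' + hprod / 2
    _ ≤ Real.exp (-(1 / 2)) *
          (((k ^ 2 : ℕ) : ℝ) * |t| - Real.exp (((k ^ 2 : ℕ) : ℝ) * t ^ 2 / 2) / 2) := by
        gcongr
    _ ≤ _ := by
        gcongr
        exact_mod_cast sub_le_norm_mul_pow_add_pow t (k ^ 2)

theorem sq_le_two_mul_norm_apply_binomialSum_sq
    (T : Lp ℂ 2 (volume.restrict (Ioo (0 : ℝ) 1)) →L[ℂ] Lp ℂ 2 (volume.restrict (Ioo (0 : ℝ) 1)))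
    (hT : ∀ n : ℕ, T (mono n) =
      ((((n : ℝ) + 1 / 2) * Real.exp (-((n : ℝ) + 1 / 2)) : ℝ) : ℂ) • mono n)
    {k : ℕ} (hk : 6 ≤ k) :
    ((k : ℝ) / 12 - 1 / 2) ^ 2 ≤ 2 * ‖T (binomialSum mono (k ^ 2) (I / k))‖ ^ 2 := by
  have hk6 : (6 : ℝ) ≤ k := by exact_mod_cast hk
  have hmeasure : (volume.restrict (Ioo (0 : ℝ) 1)).real (Ioo (1 / 2) 1) = 1 / 2 := by
    rw [measureReal_restrict_apply measurableSet_Ioo,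
      inter_eq_self_of_subset_left (Set.Ioo_subset_Ioo (by norm_num) le_rfl), Real.volume_real_Ioo]
    norm_num
  have hmarkov := Lp.pow_mul_measureReal_le_norm_pow two_ne_zero ENNReal.ofNat_ne_top _
    (by linarith : (0 : ℝ) ≤ k / 12 - 1 / 2)
    (ae_le_norm_apply_binomialSum hmono T hT (by omega : 0 < k))
  rw [hmeasure] at hmarkov
  norm_num at hmarkov
  linarith

end UnitInterval

/-- There is no bounded linear operator `T` on `L²((0,1); ℂ)` with
`T(xⁿ) = (n + 1/2) e^{-(n+1/2)} · xⁿ` for every `n`; in particular a monomial operator can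
fail to be bounded even though its coefficient sequence tends to `0`. -/
theorem stmt6
    (mono : ℕ → Lp ℂ 2 (volume.restrict (Ioo (0:ℝ) 1)))
    (hmono : ∀ n : ℕ, (mono n : ℝ → ℂ) =ᵐ[volume.restrict (Ioo (0:ℝ) 1)]
      fun x : ℝ => (x : ℂ) ^ (n : ℕ)) :
    ¬ ∃ T : Lp ℂ 2 (volume.restrict (Ioo (0:ℝ) 1)) →L[ℂ]
        Lp ℂ 2 (volume.restrict (Ioo (0:ℝ) 1)),
      ∀ n : ℕ, T (mono n) =
        ((((n : ℝ) + 1/2) * Real.exp (-((n : ℝ) + 1/2)) : ℝ) : ℂ) • mono n := by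
  rintro ⟨T, hT⟩
  obtain ⟨k, hk⟩ := exists_nat_ge (36 * ‖T‖ + 12)
  have hk6 : 6 ≤ k := by exact_mod_cast (by linarith [norm_nonneg T] : (6 : ℝ) ≤ k)
  have hlower := sq_le_two_mul_norm_apply_binomialSum_sq hmono T hT hk6
  have hupper : ‖T (binomialSum mono (k ^ 2) (I / k))‖ ≤ ‖T‖ * 2 :=
    T.le_opNorm_of_le (norm_binomialSum_le hmono k)
  nlinarith [norm_nonneg T, norm_nonneg (T (binomialSum mono (k ^ 2) (I / k)))]
end

section
/- Let f : (0,1) → ℝ be defined by f(t) = 1/(√t · log t) for t ∈ (0, 1/2) and f(t) = 0 for t ∈ [1/2, 1). Then f belongs to L²((0,1); ℝ), but for every x ∈ (0,1) the function t ↦ f(t²) is not Lebesgue integrable on (0,x). Consequently, there is no bounded linear operator T₂ on L²((0,1); ℂ) given by (T₂ f)(x) = ∫₀ˣ f(t²) dt, i.e. the monomial operator T₂ with T₂(xⁿ) = x^{2n+1}/(2n+1) is unbounded. -/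
/-!
Near `0`, `f(t)² = 1/(t log² t)` has the bounded antiderivative `-1/log t`, so `f ∈ L²`,
whereas `f(t²) = 1/(2 t log t)` has the antiderivative `½ log(-log t)`, which is unbounded at `0⁺`.
No linear `T₂` is given by that formula: the Bochner integral of a non-integrable function is
`0`, so the formula yields `T₂ f = 0 = T₂ (f + 1)` almost everywhere, while `(T₂ 1)(x) = x`.
-/

open MeasureTheory Set Filter Topology Real

local notation "μ₀" => volume.restrict (Ioo (0:ℝ) 1)

theorem ae_restrict_Ioi_comp_sq {p : ℝ → Prop} (h : ∀ᵐ t ∂volume.restrict (Ioi 0), p t) :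
    ∀ᵐ t ∂volume.restrict (Ioi 0), p (t ^ 2) := by
  rw [ae_restrict_iff' measurableSet_Ioi, ae_iff] at h ⊢
  -- the exceptional set for `p (t ^ 2)` is the image of the one for `p` under `√`,
  -- which is differentiable away from `0`
  have hsqrt : DifferentiableOn ℝ sqrt {t | ¬(t ∈ Ioi 0 → p t)} := fun t ht =>
    (hasDerivAt_sqrt (Classical.not_imp.1 ht).1.ne').differentiableAt.differentiableWithinAt
  refine measure_mono_null (fun t ht => ?_)
    (addHaar_image_eq_zero_of_differentiableOn_of_addHaar_eq_zero volume hsqrt h)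
  obtain ⟨ht₀, hpt⟩ := Classical.not_imp.1 ht
  exact ⟨t ^ 2, Classical.not_imp.2 ⟨mem_Ioi.2 (pow_pos ht₀ 2), hpt⟩, sqrt_sq ht₀.le⟩

theorem comp_sq_ae_eq {α : Type*} {g h : ℝ → α} (hgh : g =ᵐ[μ₀] h) :
    (fun t => g (t ^ 2)) =ᵐ[μ₀] fun t => h (t ^ 2) := by
  rw [EventuallyEq, ae_restrict_iff' measurableSet_Ioo] at hgh
  have := ae_restrict_Ioi_comp_sq (ae_restrict_of_ae hgh)
  filter_upwards [ae_restrict_of_ae_restrict_of_subset Ioo_subset_Ioi_self this,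
    ae_restrict_mem measurableSet_Ioo] with t ht ht₁
  exact ht ⟨pow_pos ht₁.1 2, pow_lt_one₀ ht₁.1.le ht₁.2 two_ne_zero⟩

theorem integrableOn_inv_mul_log_sq {c : ℝ} (hc : c < 1) :
    IntegrableOn (fun t => (t * log t ^ 2)⁻¹) (Ioc 0 c) := by
  have hlog : ∀ t ∈ Ioo 0 c, log t ≠ 0 := fun t ht => (log_neg ht.1 (ht.2.trans hc)).ne
  refine intervalIntegral.integrableOn_deriv_of_nonneg (g := fun t => -(log t)⁻¹) ?_ ?_ ?_
  · intro t ht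
    rcases eq_or_lt_of_le ht.1 with rfl | ht₀
    -- `log 0 = 0`, so `-(log t)⁻¹` takes at `0` the value of its limit
    · refine ContinuousAt.continuousWithinAt ?_
      rw [← continuousWithinAt_compl_self, ContinuousWithinAt, log_zero, inv_zero, neg_zero]
      simpa using tendsto_log_nhdsNE_zero.inv_tendsto_atBot.neg
    · have hlog₀ : log t ≠ 0 := (log_neg ht₀ (ht.2.trans_lt hc)).ne
      exact ((continuousAt_log ht₀.ne').inv₀ hlog₀).neg.continuousWithinAt
  · intro t ht
    refine (((hasDerivAt_log ht.1.ne').inv (hlog t ht)).neg).congr_deriv ?_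
    field_simp
  · intro t ht
    have := hlog t ht
    have := ht.1
    positivity

theorem not_integrableOn_inv_mul_log {x : ℝ} (hx : 0 < x) :
    ¬ IntegrableOn (fun t => (t * log t)⁻¹) (Ioo 0 x) := by
  have hderiv : ∀ᶠ t in 𝓝[>] 0, HasDerivAt (fun t => log (-log t)) (t * log t)⁻¹ t := by
    filter_upwards [Ioo_mem_nhdsGT one_pos] with t ht
    have hlog : -log t ≠ 0 := neg_ne_zero.2 (log_neg ht.1 ht.2).ne
    refine ((hasDerivAt_log ht.1.ne').neg.log hlog).congr_deriv ?_
    simp only [Pi.neg_apply]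
    field_simp
  refine not_integrableOn_of_tendsto_norm_atTop_of_deriv_isBigO_filter (𝓝[>] 0)
    (Ioo_mem_nhdsGT hx) (hderiv.mono fun t ht => ht.differentiableAt) ?_
    (EventuallyEq.isBigO (hderiv.mono fun _ ht => ht.deriv))
  exact tendsto_norm_atTop_atTop.comp
    (tendsto_log_atTop.comp (tendsto_neg_atBot_atTop.comp tendsto_log_nhdsGT_zero))

theorem memLp_two_of_eq_inv_sqrt_mul_log (f : ℝ → ℝ)
    (hf₁ : ∀ t ∈ Ioo (0:ℝ) (1/2), f t = 1 / (√t * log t))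
    (hf₂ : ∀ t ∈ Ico (1/2 : ℝ) 1, f t = 0) :
    MemLp f 2 μ₀ := by
  have hae : f =ᵐ[μ₀] (Iio (1/2)).indicator fun t => 1 / (√t * log t) := by
    filter_upwards [ae_restrict_mem measurableSet_Ioo] with t ht
    rcases lt_or_ge t (1/2) with h | h
    · rw [indicator_of_mem (show t ∈ Iio (1/2) from h), hf₁ t ⟨ht.1, h⟩]
    · rw [indicator_of_notMem (show t ∉ Iio (1/2) from not_lt.2 h), hf₂ t ⟨h, ht.2⟩]
  have hIoo : Iio (1/2 : ℝ) ∩ Ioo 0 1 = Ioo 0 (1/2) := by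
    ext t
    simp only [mem_inter_iff, mem_Iio, mem_Ioo]
    exact ⟨fun h => ⟨h.2.1, h.1⟩, fun h => ⟨h.2, h.1, by linarith [h.2]⟩⟩
  have hlog : ∀ t ∈ Ioo (0:ℝ) (1/2), log t ≠ 0 :=
    fun t ht => (log_neg ht.1 (by linarith [ht.2])).ne
  have hcont : ContinuousOn (fun t => 1 / (√t * log t)) (Ioo 0 (1/2)) := by
    refine continuousOn_const.div (continuous_sqrt.continuousOn.mul (continuousOn_log.mono ?_)) ?_
    · exact fun t ht => ht.1.ne'
    · exact fun t ht => mul_ne_zero (sqrt_pos.2 ht.1).ne' (hlog t ht)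
  refine MemLp.ae_eq hae.symm ?_
  rw [memLp_indicator_iff_restrict measurableSet_Iio, Measure.restrict_restrict measurableSet_Iio,
    hIoo, memLp_two_iff_integrable_sq (hcont.aestronglyMeasurable measurableSet_Ioo)]
  refine IntegrableOn.congr_fun
    ((integrableOn_inv_mul_log_sq (c := 1/2) (by norm_num)).mono_set Ioo_subset_Ioc_self)
    (fun t ht => ?_) measurableSet_Ioo
  rw [one_div, inv_pow, mul_pow, sq_sqrt ht.1.le]

theorem not_integrableOn_comp_sq_of_eq_inv_sqrt_mul_log (f : ℝ → ℝ)
    (hf₁ : ∀ t ∈ Ioo (0:ℝ) (1/2), f t = 1 / (√t * log t)) {x : ℝ} (hx : 0 < x) :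
    ¬ IntegrableOn (fun t => f (t ^ 2)) (Ioo 0 x) := by
  intro h
  have hc : 0 < min x (1/2) := lt_min hx (by norm_num)
  refine not_integrableOn_inv_mul_log hc <| IntegrableOn.congr_fun
    ((h.mono_set (Ioo_subset_Ioo_right (min_le_left _ _))).const_mul 2) (fun t ht => ?_)
    measurableSet_Ioo
  have ht₂ : t ^ 2 ∈ Ioo 0 (1/2) :=
    ⟨pow_pos ht.1 2, by nlinarith [ht.1, ht.2, min_le_right x (1/2)]⟩
  have hlog : log t ≠ 0 := (log_neg ht.1 (by linarith [ht.2, min_le_right x (1/2)])).ne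
  rw [hf₁ _ ht₂, sqrt_sq ht.1.le, log_pow]
  push_cast
  field_simp

theorem setIntegral_comp_sq_congr_ae {E : Type*} [NormedAddCommGroup E] [NormedSpace ℝ E]
    {g h : ℝ → E} (hgh : g =ᵐ[μ₀] h) {x : ℝ} (hx : x ≤ 1) :
    ∫ t in Ioo 0 x, g (t ^ 2) = ∫ t in Ioo 0 x, h (t ^ 2) :=
  integral_congr_ae <|
    ae_restrict_of_ae_restrict_of_subset (Ioo_subset_Ioo_right hx) (comp_sq_ae_eq hgh)

theorem not_exists_clm_eq_setIntegral_comp_sq {F : ℝ → ℂ} (hF : MemLp F 2 μ₀)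
    (hnint : ∀ x ∈ Ioo (0:ℝ) 1, ¬ IntegrableOn (fun t => F (t ^ 2)) (Ioo 0 x)) :
    ¬ ∃ T : Lp ℂ 2 μ₀ →L[ℂ] Lp ℂ 2 μ₀,
      ∀ g : Lp ℂ 2 μ₀, ∀ᵐ x ∂μ₀, (T g : ℝ → ℂ) x = ∫ t in Ioo 0 x, (g : ℝ → ℂ) (t ^ 2) := by
  rintro ⟨T, hT⟩
  have hT' : ∀ (g : Lp ℂ 2 μ₀) (G : ℝ → ℂ), (g : ℝ → ℂ) =ᵐ[μ₀] G →
      ∀ᵐ x ∂μ₀, (T g : ℝ → ℂ) x = ∫ t in Ioo 0 x, G (t ^ 2) := by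
    intro g G hg
    filter_upwards [hT g, ae_restrict_mem measurableSet_Ioo] with x hx hmem
    rw [hx, setIntegral_comp_sq_congr_ae hg hmem.2.le]
  have hnint₁ : ∀ x ∈ Ioo (0:ℝ) 1, ¬ IntegrableOn (fun t => F (t ^ 2) + 1) (Ioo 0 x) :=
    fun x hx h => hnint x hx <| (h.sub (integrableOn_const (C := (1:ℂ)) (by simp))).congr_fun
      (fun t _ => add_sub_cancel_right _ _) measurableSet_Ioo
  have hone : MemLp (fun _ => (1 : ℂ)) 2 μ₀ := memLp_const 1
  set u := hF.toLp F
  set one := hone.toLp _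
  have hsum : ((u + one : Lp ℂ 2 μ₀) : ℝ → ℂ) =ᵐ[μ₀] fun t => F t + 1 :=
    (Lp.coeFn_add _ _).trans (hF.coeFn_toLp.add hone.coeFn_toLp)
  have hadd : ∀ᵐ x ∂μ₀, (T (u + one) : ℝ → ℂ) x = (T u : ℝ → ℂ) x + (T one : ℝ → ℂ) x := by
    rw [map_add]
    exact Lp.coeFn_add _ _
  have hfalse : ∀ᵐ x ∂μ₀, False := by
    filter_upwards [hadd, hT' u _ hF.coeFn_toLp, hT' one _ hone.coeFn_toLp,
      hT' _ _ hsum, ae_restrict_mem measurableSet_Ioo] with x hx hu h₁ hu₁ hmem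
    rw [hu, h₁, hu₁, integral_undef (hnint x hmem), integral_undef (hnint₁ x hmem),
      setIntegral_const, volume_real_Ioo] at hx
    simp only [sub_zero, max_eq_left hmem.1.le, Complex.real_smul, mul_one, zero_add] at hx
    exact hmem.1.ne' (by exact_mod_cast hx.symm)
  rw [eventually_false_iff_eq_bot, ae_eq_bot, Measure.restrict_eq_zero, volume_Ioo] at hfalse
  norm_num at hfalse

/-- Let `f(t) = 1/(√t log t)` on `(0,1/2)` and `f(t) = 0` on `[1/2,1)`. Then
`f ∈ L²((0,1); ℝ)`, but for every `x ∈ (0,1)` the function `t ↦ f(t²)` is not Lebesgue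
integrable on `(0,x)`. Consequently there is no bounded linear operator `T₂` on
`L²((0,1); ℂ)` given by `(T₂g)(x) = ∫₀ˣ g(t²) dt`. -/
theorem stmt10 (f : ℝ → ℝ)
    (hf₁ : ∀ t ∈ Ioo (0:ℝ) (1/2), f t = 1 / (Real.sqrt t * Real.log t))
    (hf₂ : ∀ t ∈ Ico (1/2 : ℝ) 1, f t = 0) :
    MemLp f 2 (volume.restrict (Ioo (0:ℝ) 1)) ∧
    (∀ x ∈ Ioo (0:ℝ) 1, ¬ IntegrableOn (fun t : ℝ => f (t ^ 2)) (Ioo (0:ℝ) x) volume) ∧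
    ¬ ∃ T₂ : Lp ℂ 2 (volume.restrict (Ioo (0:ℝ) 1)) →L[ℂ]
        Lp ℂ 2 (volume.restrict (Ioo (0:ℝ) 1)),
      ∀ g : Lp ℂ 2 (volume.restrict (Ioo (0:ℝ) 1)),
        ∀ᵐ x ∂(volume.restrict (Ioo (0:ℝ) 1)),
          (T₂ g : ℝ → ℂ) x = ∫ t in Ioo (0:ℝ) x, (g : ℝ → ℂ) (t ^ 2) := by
  have hmem := memLp_two_of_eq_inv_sqrt_mul_log f hf₁ hf₂
  have hnint : ∀ x ∈ Ioo (0:ℝ) 1, ¬ IntegrableOn (fun t => f (t ^ 2)) (Ioo 0 x) :=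
    fun x hx => not_integrableOn_comp_sq_of_eq_inv_sqrt_mul_log f hf₁ hx.1
  refine ⟨hmem, hnint, not_exists_clm_eq_setIntegral_comp_sq hmem.ofReal fun x hx h => ?_⟩
  exact hnint x hx (by simpa using h.re : Integrable _ _)
end
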